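/- arXiv:2202.09491 — 3 statements merged into one kernel-verified Lean document; each statement's English description precedes it below -/
import Mathlib

section
/- Let θ > 0, let a : ℕ → ℝ with |a(n)| ≤ 1, let γ(n) := sign(a(n)), and suppose (1/(qM)) Σ_{m=1}^{qM} γ(m)·a(m) ≥ θ/2 for given integers q, M with M ≥ q^3/3 and q sufficiently large (depending only on θ). Define A_{r,c}^{q,M} := (1/(qM)) Σ_{b=r}^{q-1+r} Σ_{n=1}^{M} γ(qn+c)·a(qn+b) and M' := ⌊qM/(q-1)⌋. Then either there exists c ∈ [0, q) with A_{c,c}^{q,M} ≥ θ/(8q), or there exists d ∈ [0, q-1) with -A_{d+1,d}^{q-1, M'} ≥ θ/(8q). -/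
open Finset

lemma aux_sum_block (Q N : ℕ) (hQ : 1 ≤ Q) (g : ℕ → ℝ) :
    ∑ c ∈ range Q, ∑ n ∈ Icc 1 N, g (Q * n + c) = ∑ m ∈ Ico Q (Q * (N + 1)), g m := by
  induction N with
  | zero => simp
  | succ N ih =>
      have h1 : ∀ c ∈ range Q, ∑ n ∈ Icc 1 (N+1), g (Q*n+c)
          = (∑ n ∈ Icc 1 N, g (Q*n+c)) + g (Q*(N+1)+c) := by
        intro c _
        exact Finset.sum_Icc_succ_top (by omega) _
      rw [Finset.sum_congr rfl h1, Finset.sum_add_distrib, ih]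
      have h3 : Q ≤ Q * (N+1) := Nat.le_mul_of_pos_right Q (by omega)
      have h2 : Q * (N+1) ≤ Q * (N+1+1) := Nat.mul_le_mul_left Q (by omega)
      rw [← Finset.sum_Ico_consecutive g h3 h2]
      congr 1
      rw [Finset.sum_Ico_eq_sum_range]
      have hQQ : Q * (N+1+1) - Q*(N+1) = Q := by
        have : Q * (N+1+1) = Q*(N+1) + Q := by ring
        omega
      rw [hQQ]

lemma aux_abs_sum_le_card (s : Finset ℕ) (f : ℕ → ℝ) (hf : ∀ m, |f m| ≤ 1) :
    |∑ m ∈ s, f m| ≤ s.card := by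
  calc |∑ m ∈ s, f m| ≤ ∑ m ∈ s, |f m| := Finset.abs_sum_le_sum_abs _ _
    _ ≤ ∑ _m ∈ s, (1:ℝ) := Finset.sum_le_sum (fun m _ => hf m)
    _ = s.card := by simp

lemma aux_sign_mul_self (x : ℝ) : Real.sign x * x = |x| := by
  rcases lt_trichotomy x 0 with h | h | h
  · rw [Real.sign_of_neg h, abs_of_neg h]; ring
  · simp [h]
  · rw [Real.sign_of_pos h, abs_of_pos h]; ring

lemma aux_abs_sign_le (x : ℝ) : |Real.sign x| ≤ 1 := by
  rcases lt_trichotomy x 0 with h | h | h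
  · rw [Real.sign_of_neg h]; norm_num
  · simp [h]
  · rw [Real.sign_of_pos h]; norm_num

lemma aux_final (θ q M : ℝ) (hθ : 0 < θ) (hq : 2 ≤ q) (hM : q^3/3 ≤ M)
    (h24 : 24 < θ*q) (hkey : θ/4*(q*M) ≤ q + q^2) : False := by
  have hqpos : (0:ℝ) < q := by linarith
  nlinarith [mul_le_mul_of_nonneg_left hM (by positivity : (0:ℝ) ≤ θ*q),
    mul_lt_mul_of_pos_right h24 (by positivity : (0:ℝ) < q^3),
    mul_nonneg (sub_nonneg.mpr hq) (sq_nonneg q), sq_nonneg q]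

theorem stmt_7 (θ : ℝ) (hθ : 0 < θ) :
    ∃ q0 : ℕ, ∀ (q M : ℕ) (a : ℕ → ℝ), q0 ≤ q → (q : ℝ) ^ 3 / 3 ≤ M →
      (∀ n, |a n| ≤ 1) →
      (let γ : ℕ → ℝ := fun n => Real.sign (a n)
       let A : ℕ → ℕ → ℕ → ℕ → ℝ := fun r c Q M' =>
         (1 / (Q * M' : ℝ)) * ∑ b ∈ Icc r (Q - 1 + r), ∑ n ∈ Icc 1 M', γ (Q * n + c) * a (Q * n + b)
       θ / 2 ≤ (1 / (q * M : ℝ)) * ∑ m ∈ Icc 1 (q * M), γ m * a m →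
         (∃ c < q, θ / (8 * q) ≤ A c c q M) ∨
         (∃ d < q - 1, θ / (8 * q) ≤ -A (d + 1) d (q - 1) (q * M / (q - 1)))) := by
  obtain ⟨k, hk⟩ := exists_nat_gt (24 / θ)
  refine ⟨k + 2, ?_⟩
  intro q M a hq hM ha
  intro γ A hmain
  by_contra hcon
  push_neg at hcon
  obtain ⟨h1, h2⟩ := hcon
  have hq2 : 2 ≤ q := by omega
  have hq2R : (2:ℝ) ≤ q := by exact_mod_cast hq2
  have hqpos : (0:ℝ) < q := by linarith
  have hM2R : (2:ℝ) < M := by nlinarith [sq_nonneg ((q:ℝ)-2), sq_nonneg ((q:ℝ)+1)]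
  have hM1 : 1 ≤ M := by
    have : (2:ℕ) < M := by exact_mod_cast hM2R
    omega
  have hMpos : (0:ℝ) < M := by linarith
  set M' : ℕ := q * M / (q - 1) with hM'def
  -- nat division facts
  have hmod : (q-1) * M' + (q*M) % (q-1) = q*M := Nat.div_add_mod _ _
  have hmodlt : (q*M) % (q-1) < q - 1 := Nat.mod_lt _ (by omega)
  have hqM : q ≤ q * M := Nat.le_mul_of_pos_right q (by omega)
  have hle : (q-1) * M' ≤ q * M := by omega
  have hge : q * M ≤ (q-1) * M' + (q-2) := by omega
  have hM'1 : 1 ≤ M' := by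
    rcases Nat.eq_zero_or_pos M' with h | h
    · rw [h] at hge; omega
    · exact h
  -- the shifted correlation functions
  set f : ℕ → ℕ → ℝ := fun j m => γ m * a (m + j) with hfdef
  have habs : ∀ j m, |f j m| ≤ 1 := by
    intro j m
    simp only [hfdef]
    rw [abs_mul]
    calc |γ m| * |a (m+j)| ≤ 1 * 1 :=
          mul_le_mul (aux_abs_sign_le _) (ha _) (abs_nonneg _) zero_le_one
      _ = 1 := by norm_num
  set S1 : ℕ → ℝ := fun j => ∑ m ∈ Ico q (q*(M+1)), f j m with hS1def
  set S2 : ℕ → ℝ := fun j => ∑ m ∈ Ico (q-1) ((q-1)*(M'+1)), f j m with hS2def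
  -- main hypothesis in absolute-value form
  have hqMpos : (0:ℝ) < (q:ℝ) * M := mul_pos hqpos hMpos
  have habs_main : ∑ m ∈ Icc 1 (q*M), γ m * a m = ∑ m ∈ Icc 1 (q*M), |a m| := by
    refine Finset.sum_congr rfl (fun m _ => ?_)
    show Real.sign (a m) * a m = |a m|
    exact aux_sign_mul_self (a m)
  have hmain' : θ/2 * ((q:ℝ)*M) ≤ ∑ m ∈ Icc 1 (q*M), |a m| := by
    rw [← habs_main]
    have := mul_le_mul_of_nonneg_right hmain (le_of_lt hqMpos)
    calc θ/2 * ((q:ℝ)*M) ≤ (1/((q:ℝ)*M) * ∑ m ∈ Icc 1 (q*M), γ m * a m) * ((q:ℝ)*M) := this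
      _ = ∑ m ∈ Icc 1 (q*M), γ m * a m := by field_simp
  -- lower bound for the diagonal term S1 0
  have hf0 : ∀ m, f 0 m = |a m| := by
    intro m
    show Real.sign (a m) * a (m + 0) = |a m|
    rw [Nat.add_zero]
    exact aux_sign_mul_self (a m)
  have hS10 : θ/2 * ((q:ℝ)*M) - q ≤ S1 0 := by
    have hsplit : ∑ m ∈ Icc 1 (q*M), |a m|
        = (∑ m ∈ Ico 1 q, |a m|) + ∑ m ∈ Ico q (q*M+1), |a m| := by
      rw [← Finset.Ico_add_one_right_eq_Icc,
        ← Finset.sum_Ico_consecutive _ (by omega : 1 ≤ q) (by omega : q ≤ q*M+1)]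
    have hb1 : ∑ m ∈ Ico 1 q, |a m| ≤ (q:ℝ) := by
      calc ∑ m ∈ Ico 1 q, |a m| ≤ ∑ _m ∈ Ico 1 q, (1:ℝ) := Finset.sum_le_sum (fun m _ => ha m)
        _ = ((Ico 1 q).card : ℝ) := by simp
        _ ≤ (q:ℝ) := by rw [Nat.card_Ico]; exact_mod_cast Nat.sub_le q 1
    have hsub : ∑ m ∈ Ico q (q*M+1), |a m| ≤ S1 0 := by
      have hS1eq : S1 0 = ∑ m ∈ Ico q (q*(M+1)), |a m| := by
        simp only [hS1def]
        exact Finset.sum_congr rfl (fun m _ => hf0 m)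
      rw [hS1eq]
      apply Finset.sum_le_sum_of_subset_of_nonneg
      · apply Finset.Ico_subset_Ico le_rfl
        have : q*(M+1) = q*M + q := by ring
        omega
      · intro m _ _; exact abs_nonneg _
    linarith
  -- per-shift comparison of S1 and S2
  have hS21 : ∀ j, S2 j ≤ S1 j + q := by
    intro j
    have e2eq : (q-1)*(M'+1) = (q-1)*M' + (q-1) := by ring
    have e1eq : q*(M+1) = q*M + q := by ring
    have h_s1e2 : q ≤ (q-1)*(M'+1) := by omega
    have h_e2e1 : (q-1)*(M'+1) ≤ q*(M+1) := by omega
    have split1 : S1 j = (∑ m ∈ Ico q ((q-1)*(M'+1)), f j m)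
        + ∑ m ∈ Ico ((q-1)*(M'+1)) (q*(M+1)), f j m := by
      simp only [hS1def]
      rw [Finset.sum_Ico_consecutive _ h_s1e2 h_e2e1]
    have split2 : S2 j = (∑ m ∈ Ico (q-1) q, f j m)
        + ∑ m ∈ Ico q ((q-1)*(M'+1)), f j m := by
      simp only [hS2def]
      rw [Finset.sum_Ico_consecutive _ (by omega : q-1 ≤ q) h_s1e2]
    have b1 := aux_abs_sum_le_card (Ico (q-1) q) (f j) (habs j)
    have b2 := aux_abs_sum_le_card (Ico ((q-1)*(M'+1)) (q*(M+1))) (f j) (habs j)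
    rw [Nat.card_Ico] at b1 b2
    have c1 : ((q - (q-1) : ℕ) : ℝ) ≤ 1 := by exact_mod_cast (by omega : q - (q-1) ≤ 1)
    have c2 : ((q*(M+1) - (q-1)*(M'+1) : ℕ) : ℝ) ≤ (q:ℝ) - 1 := by
      have hnat : q*(M+1) - (q-1)*(M'+1) ≤ q - 1 := by omega
      calc ((q*(M+1) - (q-1)*(M'+1) : ℕ) : ℝ) ≤ ((q - 1 : ℕ):ℝ) := by exact_mod_cast hnat
        _ ≤ (q:ℝ) - 1 := by
            rw [Nat.cast_sub (by omega)]; norm_num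
    have d1 := abs_le.mp b1
    have d2 := abs_le.mp b2
    linarith
  -- identity 1 : sum of diagonal A's
  have hId1 : ∑ c ∈ range q, ∑ b ∈ Icc c (q-1+c), ∑ n ∈ Icc 1 M, γ (q*n+c) * a (q*n+b)
      = ∑ j ∈ range q, S1 j := by
    have hc : ∀ c ∈ range q, ∑ b ∈ Icc c (q-1+c), ∑ n ∈ Icc 1 M, γ (q*n+c) * a (q*n+b)
        = ∑ j ∈ range q, ∑ n ∈ Icc 1 M, f j (q*n+c) := by
      intro c _
      rw [← Finset.Ico_add_one_right_eq_Icc, Finset.sum_Ico_eq_sum_range]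
      rw [show q - 1 + c + 1 - c = q from by omega]
      refine Finset.sum_congr rfl (fun j _ => Finset.sum_congr rfl (fun n _ => ?_))
      simp only [hfdef]
      rw [show q*n + (c + j) = q*n + c + j from by omega]
    rw [Finset.sum_congr rfl hc, Finset.sum_comm]
    refine Finset.sum_congr rfl (fun j _ => ?_)
    simp only [hS1def]
    exact aux_sum_block q M (by omega) (f j)
  -- identity 2 : sum of shifted A's
  have hId2 : ∑ d ∈ range (q-1), ∑ b ∈ Icc (d+1) (q-1-1+(d+1)), ∑ n ∈ Icc 1 M',
        γ ((q-1)*n+d) * a ((q-1)*n+b)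
      = ∑ i ∈ range (q-1), S2 (i+1) := by
    have hd : ∀ d ∈ range (q-1), ∑ b ∈ Icc (d+1) (q-1-1+(d+1)), ∑ n ∈ Icc 1 M',
          γ ((q-1)*n+d) * a ((q-1)*n+b)
        = ∑ i ∈ range (q-1), ∑ n ∈ Icc 1 M', f (i+1) ((q-1)*n+d) := by
      intro d _
      rw [← Finset.Ico_add_one_right_eq_Icc, Finset.sum_Ico_eq_sum_range]
      rw [show q - 1 - 1 + (d+1) + 1 - (d+1) = q - 1 from by omega]
      refine Finset.sum_congr rfl (fun i _ => Finset.sum_congr rfl (fun n _ => ?_))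
      simp only [hfdef]
      rw [show (q-1)*n + (d + 1 + i) = (q-1)*n + d + (i+1) from by omega]
    rw [Finset.sum_congr rfl hd, Finset.sum_comm]
    refine Finset.sum_congr rfl (fun i _ => ?_)
    simp only [hS2def]
    exact aux_sum_block (q-1) M' (by omega) (f (i+1))
  -- unfold A
  have hA1 : ∑ c ∈ range q, A c c q M = (1/((q:ℝ)*M)) * ∑ j ∈ range q, S1 j := by
    simp only [A]
    rw [← Finset.mul_sum, hId1]
  have hA2 : ∑ d ∈ range (q-1), A (d+1) d (q-1) M'
      = (1/(((q-1:ℕ):ℝ)*M')) * ∑ i ∈ range (q-1), S2 (i+1) := by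
    simp only [A]
    rw [← Finset.mul_sum, hId2]
  -- bounds on the A-sums from the contradiction hypothesis
  have hSig1 : ∑ c ∈ range q, A c c q M < θ/8 := by
    have hlt : ∑ c ∈ range q, A c c q M < ∑ _c ∈ range q, θ/(8*q) :=
      Finset.sum_lt_sum_of_nonempty ⟨0, mem_range.mpr (by omega)⟩
        (fun c hc => h1 c (mem_range.mp hc))
    rw [Finset.sum_const, card_range, nsmul_eq_mul] at hlt
    have : (q:ℝ) * (θ/(8*q)) = θ/8 := by field_simp
    linarith
  have hSig2 : -(θ/8) ≤ ∑ d ∈ range (q-1), A (d+1) d (q-1) M' := by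
    have hlt : ∑ _d ∈ range (q-1), (-(θ/(8*q))) < ∑ d ∈ range (q-1), A (d+1) d (q-1) M' :=
      Finset.sum_lt_sum_of_nonempty ⟨0, mem_range.mpr (by omega)⟩
        (fun d hd => by have := h2 d (mem_range.mp hd); linarith)
    rw [Finset.sum_const, card_range, nsmul_eq_mul] at hlt
    have hcast : ((q-1:ℕ):ℝ) ≤ (q:ℝ) := by exact_mod_cast Nat.sub_le q 1
    have h8 : (0:ℝ) < θ/(8*q) := by positivity
    have hqt : (q:ℝ) * (θ/(8*q)) = θ/8 := by field_simp
    have hmono : ((q-1:ℕ):ℝ) * (θ/(8*q)) ≤ (q:ℝ) * (θ/(8*q)) :=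
      mul_le_mul_of_nonneg_right hcast (le_of_lt h8)
    linarith
  -- assemble
  have hq1M'pos : (0:ℝ) < ((q-1:ℕ):ℝ) * M' := by
    have hx : (0:ℝ) < ((q-1:ℕ):ℝ) := by exact_mod_cast (by omega : 0 < q-1)
    have hy : (0:ℝ) < ((M':ℕ):ℝ) := by exact_mod_cast (by omega : 0 < M')
    exact mul_pos hx hy
  have hT1 : ∑ j ∈ range q, S1 j < θ/8 * ((q:ℝ)*M) := by
    have := hSig1
    rw [hA1] at this
    calc ∑ j ∈ range q, S1 j = (1/((q:ℝ)*M) * ∑ j ∈ range q, S1 j) * ((q:ℝ)*M) := by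
          rw [one_div, inv_mul_eq_div, div_mul_cancel₀ _ (ne_of_gt hqMpos)]
      _ < θ/8 * ((q:ℝ)*M) := mul_lt_mul_of_pos_right this hqMpos
  have hT2 : -(θ/8) * (((q-1:ℕ):ℝ) * M') ≤ ∑ i ∈ range (q-1), S2 (i+1) := by
    have := hSig2
    rw [hA2] at this
    calc -(θ/8) * (((q-1:ℕ):ℝ) * M')
        ≤ (1/(((q-1:ℕ):ℝ)*M') * ∑ i ∈ range (q-1), S2 (i+1)) * (((q-1:ℕ):ℝ) * M') :=
          mul_le_mul_of_nonneg_right this (le_of_lt hq1M'pos)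
      _ = ∑ i ∈ range (q-1), S2 (i+1) := by
          rw [one_div, inv_mul_eq_div, div_mul_cancel₀ _ (ne_of_gt hq1M'pos)]
  have hsum_split : ∑ j ∈ range q, S1 j = (∑ i ∈ range (q-1), S1 (i+1)) + S1 0 := by
    conv_lhs => rw [show q = (q-1)+1 from by omega]
    exact Finset.sum_range_succ' S1 (q-1)
  have hS2sum : ∑ i ∈ range (q-1), S2 (i+1)
      ≤ (∑ i ∈ range (q-1), S1 (i+1)) + ((q-1:ℕ):ℝ) * q := by
    calc ∑ i ∈ range (q-1), S2 (i+1) ≤ ∑ i ∈ range (q-1), (S1 (i+1) + q) :=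
          Finset.sum_le_sum (fun i _ => hS21 (i+1))
      _ = (∑ i ∈ range (q-1), S1 (i+1)) + ((q-1:ℕ):ℝ) * q := by
          rw [Finset.sum_add_distrib, Finset.sum_const, card_range, nsmul_eq_mul]
  -- final numeric contradiction
  have hleR : ((q-1:ℕ):ℝ) * M' ≤ (q:ℝ) * M := by
    calc ((q-1:ℕ):ℝ) * M' = (((q-1) * M' : ℕ) : ℝ) := by push_cast; ring
      _ ≤ ((q*M : ℕ):ℝ) := by exact_mod_cast hle
      _ = (q:ℝ) * M := by push_cast; ring
  have hcastq1 : ((q-1:ℕ):ℝ) ≤ (q:ℝ) := by exact_mod_cast Nat.sub_le q 1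
  have hmul : -(θ/8) * ((q:ℝ)*M) ≤ -(θ/8) * (((q-1:ℕ):ℝ)*M') := by
    have := mul_le_mul_of_nonneg_left hleR (by positivity : (0:ℝ) ≤ θ/8)
    linarith
  have hmulq : ((q-1:ℕ):ℝ) * (q:ℝ) ≤ (q:ℝ) * (q:ℝ) :=
    mul_le_mul_of_nonneg_right hcastq1 (le_of_lt hqpos)
  have hkey : θ/4 * ((q:ℝ)*M) ≤ (q:ℝ) + (q:ℝ)^2 := by
    linarith [hT1, hT2, hS10, hsum_split, hS2sum, hmul, hmulq]
  have h24 : 24 < θ * q := by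
    have hkq : (24/θ : ℝ) < q := by
      calc (24/θ:ℝ) < k := hk
        _ ≤ q := by exact_mod_cast (by omega : k ≤ q)
    rw [div_lt_iff₀ hθ] at hkq
    linarith
  exact aux_final θ q M hθ hq2R hM h24 hkey
end

section
/- Let (q_k) be a strictly increasing sequence of positive integers with q_{k+1}/q_k → ∞, and fix M, H ∈ ℕ. For each k and each residue r_k ∈ [0, q_k), let Λ_k := {n ∈ ℕ : q_k ≤ n ≤ q_{k+1} − H − M, and n mod q_k ∉ {r_k − H − M + 1, ..., r_k} (mod q_k)}. Then Λ := ∪_k Λ_k has natural density 1: lim_{N→∞} (1/N)·#({1,...,N} ∩ Λ) = 1. -/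
/-!
If `q (k+1) ≤ N < q (k+2)`, an `n ≤ N` outside `Λ` lies below `q k`, or it lies in one of
the blocks `[q k, q (k+1))`, `[q (k+1), N]` and is either among the last `H + M` integers of
its block or in one of the `H + M` excluded residue classes. A residue class modulo `Q` meets an
interval of length `L` in at most `L / Q + 1` points, so, after dividing by `N ≥ q (k+1)`, the
exceptions have proportion `O(q k / q (k+1) + (H + M) / q k)`, which tends to `0` because
`q (k+1) / q k → ∞`.
-/

open Filter Topology Set

theorem ncard_Icc_modEq_le (Q : ℕ) (v : ℤ) (a b : ℕ) :
    {n ∈ Icc a b | v ≡ n [ZMOD Q]}.ncard ≤ (b - a) / Q + 1 := by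
  calc _ ≤ (Iio ((b - a) / Q + 1)).ncard := by
        refine ncard_le_ncard_of_injOn (fun n => (n - a) / Q) ?_ ?_ (finite_Iio _)
        · rintro n ⟨⟨-, hnb⟩, -⟩
          exact Nat.lt_succ_of_le (Nat.div_le_div_right (by omega))
        · rintro n ⟨⟨han, -⟩, hn⟩ m ⟨⟨ham, -⟩, hm⟩ (hdiv : (n - a) / Q = (m - a) / Q)
          -- `n - a` is determined by its quotient and its remainder modulo `Q`.
          have hmod : (n - a) % Q = (m - a) % Q := by
            have : ((n - a : ℕ) : ℤ) ≡ (m - a : ℕ) [ZMOD Q] := by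
              push_cast [han, ham]
              exact (hn.symm.trans hm).sub_right _
            exact Int.natCast_modEq_iff.mp this
          have := Nat.div_add_mod (n - a) Q
          have := Nat.div_add_mod (m - a) Q
          rw [hdiv, hmod] at *
          omega
    _ = (b - a) / Q + 1 := ncard_Iio_nat _

/-- `n mod Q` lies in the window `{c - D + 1, …, c}` of `D` consecutive residues. -/
def InResidueWindow (Q : ℕ) (c : ℤ) (D n : ℕ) : Prop :=
  ∃ i < D, (Q : ℤ) ∣ n - (c - i)

theorem ncard_Icc_inResidueWindow_le (Q : ℕ) (c : ℤ) (D a b : ℕ) :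
    {n ∈ Icc a b | InResidueWindow Q c D n}.ncard ≤ D * ((b - a) / Q + 1) := by
  have hunion : {n ∈ Icc a b | InResidueWindow Q c D n} =
      ⋃ i ∈ Finset.range D, {n ∈ Icc a b | c - i ≡ n [ZMOD Q]} := by
    ext n
    simp [InResidueWindow, Int.modEq_iff_dvd]
  calc _ ≤ ∑ i ∈ Finset.range D, {n ∈ Icc a b | c - i ≡ n [ZMOD Q]}.ncard :=
        hunion ▸ Finset.set_ncard_biUnion_le _ _
    _ ≤ ∑ i ∈ Finset.range D, ((b - a) / Q + 1) :=
        Finset.sum_le_sum fun i _ => ncard_Icc_modEq_le Q _ a b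
    _ = D * ((b - a) / Q + 1) := by simp

/-- The paper's `Λ_k`, with `D = H + M` and `c k = r_k`. -/
def blockSet (q : ℕ → ℕ) (c : ℕ → ℤ) (D k : ℕ) : Set ℕ :=
  {n | q k ≤ n ∧ n ≤ q (k + 1) - D ∧ ¬ InResidueWindow (q k) (c k) D n}

theorem ncard_Icc_diff_blockSet_le (q : ℕ → ℕ) (c : ℕ → ℤ) (D k : ℕ) {b : ℕ}
    (hb : b < q (k + 1)) : (Icc (q k) b \ blockSet q c D k).ncard ≤ D * (b / q k + 2) := by
  have hsub : Icc (q k) b \ blockSet q c D k ⊆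
      {n ∈ Icc (q k) b | InResidueWindow (q k) (c k) D n} ∪ Ioc (q (k + 1) - D) b := by
    rintro n ⟨⟨hkn, hnb⟩, hn⟩
    by_cases hnD : n ≤ q (k + 1) - D
    · exact Or.inl ⟨⟨hkn, hnb⟩, by_contra fun hw => hn ⟨hkn, hnD, hw⟩⟩
    · exact Or.inr ⟨by omega, hnb⟩
  calc _ ≤ _ := ncard_le_ncard hsub
        (((finite_Icc _ _).subset (sep_subset _ _)).union (finite_Ioc _ _))
    _ ≤ D * ((b - q k) / q k + 1) + (b - (q (k + 1) - D)) :=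
        (ncard_union_le _ _).trans (add_le_add (ncard_Icc_inResidueWindow_le _ _ _ _ _)
          (ncard_Ioc_nat _ _).le)
    _ ≤ D * (b / q k + 1) + D := by
        gcongr
        · exact Nat.sub_le _ _
        · omega
    _ = D * (b / q k + 2) := by ring

theorem ncard_Icc_diff_iUnion_blockSet_le (q : ℕ → ℕ) (c : ℕ → ℤ) (D : ℕ) {k N : ℕ}
    (hk : 0 < q (k + 1)) (hN : N < q (k + 2)) :
    (Icc 1 N \ ⋃ j, blockSet q c D j).ncard ≤
      q k + D * (q (k + 1) / q k + 2) + D * (N / q (k + 1) + 2) := by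
  have hsub : Icc 1 N \ ⋃ j, blockSet q c D j ⊆ Iio (q k) ∪
      (Icc (q k) (q (k + 1) - 1) \ blockSet q c D k) ∪
      (Icc (q (k + 1)) N \ blockSet q c D (k + 1)) := by
    rintro n ⟨⟨-, hnN⟩, hn⟩
    rw [mem_iUnion, not_exists] at hn
    by_cases hnk : n < q k
    · exact Or.inl (Or.inl hnk)
    by_cases hnk1 : n < q (k + 1)
    · exact Or.inl (Or.inr ⟨⟨by omega, by omega⟩, hn k⟩)
    · exact Or.inr ⟨⟨by omega, hnN⟩, hn (k + 1)⟩
  calc _ ≤ _ := ncard_le_ncard hsub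
    _ ≤ _ := (ncard_union_le _ _).trans (add_le_add_left (ncard_union_le _ _) _)
    _ ≤ q k + D * ((q (k + 1) - 1) / q k + 2) + D * (N / q (k + 1) + 2) := by
        rw [ncard_Iio_nat]
        gcongr
        · exact ncard_Icc_diff_blockSet_le q c D k (by omega)
        · exact ncard_Icc_diff_blockSet_le q c D (k + 1) hN
    _ ≤ _ := by gcongr; omega

theorem ncard_Icc_diff_iUnion_blockSet_div_le (q : ℕ → ℕ) (c : ℕ → ℤ) (D : ℕ) {k N : ℕ}
    (hk : 0 < q (k + 1)) (hkN : q (k + 1) ≤ N) (hN : N < q (k + 2)) :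
    ((Icc 1 N \ ⋃ j, blockSet q c D j).ncard : ℝ) / N ≤
      q k / q (k + 1) + D / q k + 5 * D / q (k + 1) := by
  have hk' : (0 : ℝ) < q (k + 1) := by exact_mod_cast hk
  have hkN' : (q (k + 1) : ℝ) ≤ N := by exact_mod_cast hkN
  have hN0 : (0 : ℝ) < N := hk'.trans_le hkN'
  have hcount : ((Icc 1 N \ ⋃ j, blockSet q c D j).ncard : ℝ) ≤
      q k + D * (q (k + 1) / q k + 2) + D * (N / q (k + 1) + 2) := by
    have h := ncard_Icc_diff_iUnion_blockSet_le q c D hk hN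
    calc _ ≤ ((q k + D * (q (k + 1) / q k + 2) + D * (N / q (k + 1) + 2) : ℕ) : ℝ) := by
          exact_mod_cast h
      _ ≤ _ := by
          push_cast
          gcongr <;> exact Nat.cast_div_le
  rw [div_le_iff₀ hN0]
  refine hcount.trans ?_
  have h1 : (q k : ℝ) ≤ q k / q (k + 1) * N := by
    rw [div_mul_eq_mul_div, le_div_iff₀ hk']
    gcongr
  have h2 : (D : ℝ) * (q (k + 1) / q k) ≤ D / q k * N := by
    rw [mul_div_assoc', div_mul_eq_mul_div]
    gcongr
  have h3 : (D : ℝ) * (N / q (k + 1) + 2) + 2 * D ≤ 5 * D / q (k + 1) * N := by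
    have h4 : (4 * D : ℝ) ≤ 4 * D / q (k + 1) * N := by
      rw [div_mul_eq_mul_div, le_div_iff₀ hk']
      gcongr
    calc (D : ℝ) * (N / q (k + 1) + 2) + 2 * D = D / q (k + 1) * N + 4 * D := by ring
      _ ≤ D / q (k + 1) * N + 4 * D / q (k + 1) * N := by linarith
      _ = _ := by ring
  calc _ = q k + D * (q (k + 1) / q k) + (D * (N / q (k + 1) + 2) + 2 * D : ℝ) := by ring
    _ ≤ _ := by rw [add_mul, add_mul]; gcongr

theorem tendsto_zero_of_le_on_blocks {q : ℕ → ℕ} (hq : StrictMono q) {f g : ℕ → ℝ}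
    (hg : Tendsto g atTop (𝓝 0)) (hf : ∀ N, 0 ≤ f N)
    (hfg : ∀ k N, q k ≤ N → N < q (k + 1) → f N ≤ g k) : Tendsto f atTop (𝓝 0) := by
  refine tendsto_order.2 ⟨fun a ha => .of_forall fun N => ha.trans_le (hf N), fun a ha => ?_⟩
  obtain ⟨K, hK⟩ := eventually_atTop.1 (hg.eventually (gt_mem_nhds ha))
  filter_upwards [eventually_ge_atTop (q K)] with N hN
  obtain ⟨k, hkN, hNk⟩ :=
    hq.exists_between_of_tendsto_atTop hq.tendsto_atTop (x := N + 1)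
      (Nat.lt_succ_of_le ((hq.monotone K.zero_le).trans hN))
  have hKk : K ≤ k := by
    by_contra! h
    have := hq.monotone (show k + 1 ≤ K from h)
    omega
  exact (hfg k N (by omega) (by omega)).trans_lt (hK k hKk)

theorem tendsto_div_succ_add_div_add_div_succ (q : ℕ → ℕ) (hq : StrictMono q)
    (hratio : Tendsto (fun k => (q (k + 1) : ℝ) / q k) atTop atTop) (D : ℝ) :
    Tendsto (fun k => q k / q (k + 1) + D / q k + 5 * D / q (k + 1)) atTop (𝓝 0) := by
  have hq' : Tendsto (fun k => (q k : ℝ)) atTop atTop :=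
    tendsto_natCast_atTop_atTop.comp hq.tendsto_atTop
  have h1 : Tendsto (fun k => (q k : ℝ) / q (k + 1)) atTop (𝓝 0) :=
    hratio.inv_tendsto_atTop.congr fun k => inv_div _ _
  simpa using (h1.add (tendsto_const_nhds.div_atTop hq')).add
    (tendsto_const_nhds.div_atTop (hq'.comp (tendsto_add_atTop_nat 1)))

theorem tendsto_ncard_Icc_inter_div_of_diff (S : Set ℕ)
    (h : Tendsto (fun N => ((Icc 1 N \ S).ncard : ℝ) / N) atTop (𝓝 0)) :
    Tendsto (fun N => ((Icc 1 N ∩ S).ncard : ℝ) / N) atTop (𝓝 1) := by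
  have hsplit : ∀ᶠ N : ℕ in atTop,
      1 - ((Icc 1 N \ S).ncard : ℝ) / N = ((Icc 1 N ∩ S).ncard : ℝ) / N := by
    filter_upwards [eventually_ge_atTop 1] with N hN
    have hN : (N : ℝ) ≠ 0 := by positivity
    have hcard : ((Icc 1 N ∩ S).ncard : ℝ) + (Icc 1 N \ S).ncard = N := by
      exact_mod_cast (ncard_inter_add_ncard_sdiff_eq_ncard (Icc 1 N) S).trans (by simp)
    rw [eq_div_iff hN, sub_mul, div_mul_cancel₀ _ hN]
    linarith
  simpa using (tendsto_const_nhds.sub h).congr' hsplit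

theorem stmt_13_general (q : ℕ → ℕ) (hmono : StrictMono q)
    (hratio : Tendsto (fun k => (q (k + 1) : ℝ) / (q k : ℝ)) atTop atTop)
    (M H : ℕ) (r : ℕ → ℕ) :
    Tendsto
      (fun N : ℕ =>
        ((Set.Icc 1 N ∩ ⋃ k, {n : ℕ | q k ≤ n ∧ n ≤ q (k + 1) - H - M ∧
            ∀ i : ℕ, i < H + M → ¬ ((q k : ℤ) ∣ ((n : ℤ) - ((r k : ℤ) - i)))}).ncard : ℝ) / N)
      atTop (nhds 1) := by
  have hΛ : (⋃ k, {n : ℕ | q k ≤ n ∧ n ≤ q (k + 1) - H - M ∧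
      ∀ i : ℕ, i < H + M → ¬ ((q k : ℤ) ∣ ((n : ℤ) - ((r k : ℤ) - i)))}) =
      ⋃ k, blockSet q (fun k => r k) (H + M) k := by
    simp only [blockSet, InResidueWindow, Nat.sub_sub, not_exists, not_and]
  rw [hΛ]
  refine tendsto_ncard_Icc_inter_div_of_diff _ <| tendsto_zero_of_le_on_blocks
    (hmono.comp fun _ _ => Nat.succ_lt_succ) (tendsto_div_succ_add_div_add_div_succ q hmono hratio (H + M))
    (fun N => by positivity) fun k N hkN hN => ?_
  exact_mod_cast ncard_Icc_diff_iUnion_blockSet_div_le q _ _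
    ((Nat.zero_le _).trans_lt (hmono k.lt_succ_self)) hkN hN

theorem stmt_13 (q : ℕ → ℕ) (hmono : StrictMono q) (hpos : ∀ k, 0 < q k)
    (hratio : Tendsto (fun k => (q (k + 1) : ℝ) / (q k : ℝ)) atTop atTop)
    (M H : ℕ) (r : ℕ → ℕ) (hr : ∀ k, r k < q k) :
    Tendsto
      (fun N : ℕ =>
        ((Set.Icc 1 N ∩ ⋃ k, {n : ℕ | q k ≤ n ∧ n ≤ q (k + 1) - H - M ∧
            ∀ i : ℕ, i < H + M → ¬ ((q k : ℤ) ∣ ((n : ℤ) - ((r k : ℤ) - i)))}).ncard : ℝ) / N)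
      atTop (nhds 1) :=
  stmt_13_general q hmono hratio M H r
end

section
/- Let f : ℕ → ℂ with |f(n)| ≤ 1, and let μ be the Möbius function. Suppose Λ ⊆ ℕ has natural density 1, and for every H ∈ ℕ and every n ∈ Λ (with Λ possibly depending on H), f(n+h) = f(n) for 0 ≤ h ≤ H−1. If moreover (1/N) Σ_{n=1}^N |(1/H) Σ_{h=0}^{H-1} μ(n+h)| → 0 as first N → ∞ then H → ∞, then (1/N) Σ_{n=1}^N f(n) μ(n) → 0 as N → ∞. -/
open Filter Finset

private lemma sum_diff_eq' (s t : Finset ℕ) (g : ℕ → ℂ) :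
    (∑ x ∈ s, g x) - ∑ x ∈ t, g x = (∑ x ∈ s \ t, g x) - ∑ x ∈ t \ s, g x := by
  have h1 : ∑ x ∈ s \ (s ∩ t), g x + ∑ x ∈ s ∩ t, g x = ∑ x ∈ s, g x :=
    Finset.sum_sdiff Finset.inter_subset_left
  have h2 : ∑ x ∈ t \ (s ∩ t), g x + ∑ x ∈ s ∩ t, g x = ∑ x ∈ t, g x :=
    Finset.sum_sdiff Finset.inter_subset_right
  rw [Finset.sdiff_inter_self_left] at h1
  rw [Finset.sdiff_inter_self_right] at h2
  linear_combination h2 - h1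

private lemma mu_abs_le' (n : ℕ) : |(ArithmeticFunction.moebius n : ℝ)| ≤ 1 := by
  have := @ArithmeticFunction.abs_moebius_le_one n
  exact_mod_cast this

private lemma mu_sum_abs_le (n H : ℕ) :
    |∑ h ∈ range H, (ArithmeticFunction.moebius (n + h) : ℝ)| ≤ H := by
  calc |∑ h ∈ range H, (ArithmeticFunction.moebius (n + h) : ℝ)|
      ≤ ∑ h ∈ range H, |(ArithmeticFunction.moebius (n + h) : ℝ)| :=
        Finset.abs_sum_le_sum_abs _ _
    _ ≤ ∑ h ∈ range H, (1 : ℝ) := Finset.sum_le_sum fun h _ => mu_abs_le' _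
    _ = H := by simp

private lemma norm_sum_le_card (u : Finset ℕ) (g : ℕ → ℂ) (hg : ∀ x, ‖g x‖ ≤ 1) :
    ‖∑ x ∈ u, g x‖ ≤ (u.card : ℝ) := by
  calc ‖∑ x ∈ u, g x‖ ≤ ∑ x ∈ u, ‖g x‖ := norm_sum_le _ _
    _ ≤ ∑ x ∈ u, (1 : ℝ) := Finset.sum_le_sum fun x _ => hg x
    _ = u.card := by simp

theorem stmt_14 (f : ℕ → ℂ) (hbd : ∀ n, ‖f n‖ ≤ 1)
    (hΛ : ∀ H : ℕ, ∃ Λ : Set ℕ,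
      Tendsto (fun N : ℕ => ((Set.Icc 1 N ∩ Λ).ncard : ℝ) / N) atTop (nhds 1) ∧
      ∀ n ∈ Λ, ∀ h < H, f (n + h) = f n)
    (hMR : Tendsto (fun H : ℕ =>
        limsup (fun N : ℕ => (1 / N : ℝ) * ∑ n ∈ Icc 1 N,
          |(1 / H : ℝ) * ∑ h ∈ range H, (ArithmeticFunction.moebius (n + h) : ℝ)|) atTop)
      atTop (nhds 0)) :
    Tendsto (fun N : ℕ =>
        (1 / N : ℂ) * ∑ n ∈ Icc 1 N, f n * (ArithmeticFunction.moebius n : ℂ))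
      atTop (nhds 0) := by
  classical
  set μ := ArithmeticFunction.moebius with hμ
  set g : ℕ → ℂ := fun n => f n * (μ n : ℂ) with hg
  have hbd' : ∀ n, ‖f n‖ ≤ 1 := fun n => hbd n
  have hg1 : ∀ x, ‖g x‖ ≤ 1 := by
    intro x
    rw [hg]
    simp only [norm_mul]
    have h1 : ‖((μ x : ℤ) : ℂ)‖ ≤ 1 := by
      rw [Complex.norm_intCast]
      exact_mod_cast mu_abs_le' x
    calc ‖f x‖ * ‖((μ x : ℤ) : ℂ)‖ ≤ 1 * 1 :=
          mul_le_mul (hbd' x) h1 (norm_nonneg _) zero_le_one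
      _ = 1 := one_mul 1
  rw [NormedAddCommGroup.tendsto_nhds_zero]
  intro ε hε
  have hε3 : (0 : ℝ) < ε / 3 := by linarith
  -- choose H
  obtain ⟨H₀, hH₀⟩ := eventually_atTop.1 (hMR.eventually_lt_const hε3)
  set H := max H₀ 1 with hHdef
  have hH1 : 1 ≤ H := le_max_right _ _
  have hHpos : (0 : ℝ) < H := by exact_mod_cast hH1
  have hHR1 : (1 : ℝ) ≤ H := by exact_mod_cast hH1
  have hlimA : limsup (fun N : ℕ => (1 / N : ℝ) * ∑ n ∈ Icc 1 N,
      |(1 / H : ℝ) * ∑ h ∈ range H, (μ (n + h) : ℝ)|) atTop < ε / 3 :=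
    hH₀ H (le_max_left _ _)
  obtain ⟨Λ, hdens, hper⟩ := hΛ H
  set A : ℕ → ℝ := fun N => (1 / N : ℝ) * ∑ n ∈ Icc 1 N,
      |(1 / H : ℝ) * ∑ h ∈ range H, (μ (n + h) : ℝ)| with hA
  -- A is bounded by 1
  have hAbd : ∀ N, A N ≤ 1 := by
    intro N
    rcases Nat.eq_zero_or_pos N with h0 | hNpos
    · simp [hA, h0]
    have hterm : ∀ n ∈ Icc 1 N, |(1 / H : ℝ) * ∑ h ∈ range H, (μ (n + h) : ℝ)| ≤ 1 := by
      intro n _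
      rw [abs_mul, abs_of_nonneg (by positivity : (0:ℝ) ≤ 1/H)]
      calc (1 / H : ℝ) * |∑ h ∈ range H, (μ (n + h) : ℝ)| ≤ (1 / H) * H :=
            mul_le_mul_of_nonneg_left (mu_sum_abs_le n H) (by positivity)
        _ = 1 := by field_simp
    have hsum : ∑ n ∈ Icc 1 N, |(1 / H : ℝ) * ∑ h ∈ range H, (μ (n + h) : ℝ)| ≤ N := by
      calc ∑ n ∈ Icc 1 N, |(1 / H : ℝ) * ∑ h ∈ range H, (μ (n + h) : ℝ)|
          ≤ ∑ n ∈ Icc 1 N, (1 : ℝ) := Finset.sum_le_sum hterm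
        _ = ((Icc 1 N).card : ℝ) := by simp
        _ = N := by rw [Nat.card_Icc]; simp
    have hNR : (0 : ℝ) < N := by exact_mod_cast hNpos
    rw [hA]
    calc (1 / N : ℝ) * ∑ n ∈ Icc 1 N, |(1 / H : ℝ) * ∑ h ∈ range H, (μ (n + h) : ℝ)|
        ≤ (1 / N) * N := mul_le_mul_of_nonneg_left hsum (by positivity)
      _ = 1 := by field_simp
  have hev1 : ∀ᶠ N in atTop, A N < ε / 3 :=
    eventually_lt_of_limsup_lt hlimA (Filter.isBoundedUnder_of ⟨1, hAbd⟩)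
  have hev2 : ∀ᶠ N in atTop,
      (1 : ℝ) - ((Set.Icc 1 N ∩ Λ).ncard : ℝ) / N < ε / 3 := by
    have : Tendsto (fun N : ℕ => (1 : ℝ) - ((Set.Icc 1 N ∩ Λ).ncard : ℝ) / N) atTop (nhds 0) := by
      have := tendsto_const_nhds (x := (1:ℝ)) (f := atTop (α := ℕ)) |>.sub hdens
      simpa using this
    exact this.eventually_lt_const hε3
  have hev3 : ∀ᶠ N : ℕ in atTop, (2 * (H : ℝ) * H) / (N : ℝ) < ε / 3 :=
    (tendsto_const_div_atTop_nhds_zero_nat (2 * (H : ℝ) * H)).eventually_lt_const hε3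
  filter_upwards [hev1, hev2, hev3, eventually_ge_atTop 1] with N h1 h2 h3 hN1
  -- main estimate
  have hNpos : (0 : ℝ) < N := by exact_mod_cast hN1
  set S := ∑ n ∈ Icc 1 N, g n with hS
  set B := (Icc 1 N).filter (· ∈ Λ) with hB
  set M := ∑ n ∈ Icc 1 N, |∑ h ∈ range H, (μ (n + h) : ℝ)| with hM
  set T := ∑ n ∈ Icc 1 N, ‖∑ h ∈ range H, g (n + h)‖ with hT
  -- (i) ncard = B.card
  have hc : ((Set.Icc 1 N ∩ Λ).ncard : ℝ) = (B.card : ℝ) := by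
    congr 1
    rw [← Set.ncard_coe_finset B]
    congr 1
    ext x
    simp [hB, Set.mem_Icc, Finset.mem_Icc]
  -- (ii) per-h shift bound
  have hstep : ∀ h ∈ range H, ‖S - ∑ n ∈ Icc 1 N, g (n + h)‖ ≤ 2 * (H : ℝ) := by
    intro h hh
    have hh' : h < H := mem_range.mp hh
    have re : ∑ n ∈ Icc 1 N, g (n + h) = ∑ m ∈ Icc (1 + h) (N + h), g m := by
      rw [← Finset.map_add_right_Icc, Finset.sum_map]
      rfl
    rw [re, hS, sum_diff_eq']
    have c1 : ((Icc 1 N \ Icc (1 + h) (N + h)).card : ℝ) ≤ h := by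
      have hsub : Icc 1 N \ Icc (1 + h) (N + h) ⊆ Icc 1 h := by
        intro x hx
        simp only [Finset.mem_sdiff, mem_Icc, not_and, not_le] at hx
        simp only [mem_Icc]
        omega
      have := Finset.card_le_card hsub
      rw [Nat.card_Icc] at this
      exact_mod_cast le_trans this (by omega)
    have c2 : ((Icc (1 + h) (N + h) \ Icc 1 N).card : ℝ) ≤ h := by
      have hsub : Icc (1 + h) (N + h) \ Icc 1 N ⊆ Icc (N + 1) (N + h) := by
        intro x hx
        simp only [Finset.mem_sdiff, mem_Icc, not_and, not_le] at hx
        simp only [mem_Icc]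
        omega
      have := Finset.card_le_card hsub
      rw [Nat.card_Icc] at this
      exact_mod_cast le_trans this (by omega)
    calc ‖(∑ x ∈ Icc 1 N \ Icc (1 + h) (N + h), g x) -
            ∑ x ∈ Icc (1 + h) (N + h) \ Icc 1 N, g x‖
        ≤ ‖∑ x ∈ Icc 1 N \ Icc (1 + h) (N + h), g x‖ +
            ‖∑ x ∈ Icc (1 + h) (N + h) \ Icc 1 N, g x‖ := norm_sub_le _ _
      _ ≤ ((Icc 1 N \ Icc (1 + h) (N + h)).card : ℝ) +
            ((Icc (1 + h) (N + h) \ Icc 1 N).card : ℝ) := by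
            exact add_le_add (norm_sum_le_card _ _ hg1) (norm_sum_le_card _ _ hg1)
      _ ≤ (h : ℝ) + h := add_le_add c1 c2
      _ ≤ 2 * (H : ℝ) := by
            have : (h : ℝ) ≤ H := by exact_mod_cast hh'.le
            linarith
  -- (iii) key bound: H * ‖S‖ ≤ 2 H² + T
  have hkey1 : (H : ℝ) * ‖S‖ ≤ 2 * H * H + T := by
    have e1 : (H : ℂ) * S = ∑ h ∈ range H, S := by
      rw [Finset.sum_const, card_range, nsmul_eq_mul]
    have e2 : ∑ h ∈ range H, S =
        (∑ h ∈ range H, ∑ n ∈ Icc 1 N, g (n + h)) +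
          ∑ h ∈ range H, (S - ∑ n ∈ Icc 1 N, g (n + h)) := by
      rw [← Finset.sum_add_distrib]
      apply Finset.sum_congr rfl
      intro h _
      ring
    have n1 : ‖∑ h ∈ range H, ∑ n ∈ Icc 1 N, g (n + h)‖ ≤ T := by
      rw [Finset.sum_comm]
      exact norm_sum_le _ _
    have n2 : ‖∑ h ∈ range H, (S - ∑ n ∈ Icc 1 N, g (n + h))‖ ≤ (H : ℝ) * (2 * H) := by
      calc ‖∑ h ∈ range H, (S - ∑ n ∈ Icc 1 N, g (n + h))‖
          ≤ ∑ h ∈ range H, ‖S - ∑ n ∈ Icc 1 N, g (n + h)‖ := norm_sum_le _ _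
        _ ≤ ∑ h ∈ range H, (2 * (H : ℝ)) := Finset.sum_le_sum hstep
        _ = (H : ℝ) * (2 * H) := by rw [Finset.sum_const, card_range, nsmul_eq_mul]
    have : ‖(H : ℂ) * S‖ ≤ T + (H : ℝ) * (2 * H) := by
      rw [e1, e2]
      exact (norm_add_le _ _).trans (add_le_add n1 n2)
    rw [norm_mul, Complex.norm_natCast] at this
    linarith
  -- (iv) T ≤ M + (N - B.card) * H
  have hkey2 : T ≤ M + ((N : ℝ) - B.card) * H := by
    have hsplit : T = (∑ n ∈ B, ‖∑ h ∈ range H, g (n + h)‖) +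
        ∑ n ∈ (Icc 1 N).filter (fun n => ¬ n ∈ Λ), ‖∑ h ∈ range H, g (n + h)‖ := by
      rw [hT, hB, ← Finset.sum_filter_add_sum_filter_not (Icc 1 N) (· ∈ Λ)]
    have b1 : ∑ n ∈ B, ‖∑ h ∈ range H, g (n + h)‖ ≤ M := by
      have hpt : ∀ n ∈ B, ‖∑ h ∈ range H, g (n + h)‖ ≤ |∑ h ∈ range H, (μ (n + h) : ℝ)| := by
        intro n hn
        have hnΛ : n ∈ Λ := (Finset.mem_filter.mp hn).2
        have efac : ∑ h ∈ range H, g (n + h) = f n * ∑ h ∈ range H, ((μ (n + h) : ℤ) : ℂ) := by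
          rw [Finset.mul_sum]
          apply Finset.sum_congr rfl
          intro h hh
          rw [hg]
          simp only
          rw [hper n hnΛ h (mem_range.mp hh)]
        have ecast : (∑ h ∈ range H, ((μ (n + h) : ℤ) : ℂ)) =
            ((∑ h ∈ range H, (μ (n + h) : ℝ) : ℝ) : ℂ) := by
          push_cast
          rfl
        rw [efac, norm_mul, ecast, Complex.norm_real, Real.norm_eq_abs]
        exact mul_le_of_le_one_left (abs_nonneg _) (hbd' n)
      calc ∑ n ∈ B, ‖∑ h ∈ range H, g (n + h)‖
          ≤ ∑ n ∈ B, |∑ h ∈ range H, (μ (n + h) : ℝ)| := Finset.sum_le_sum hpt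
        _ ≤ M := by
            rw [hM]
            exact Finset.sum_le_sum_of_subset_of_nonneg (Finset.filter_subset _ _)
              (fun n _ _ => abs_nonneg _)
    have b2 : ∑ n ∈ (Icc 1 N).filter (fun n => ¬ n ∈ Λ), ‖∑ h ∈ range H, g (n + h)‖ ≤
        (((Icc 1 N).filter (fun n => ¬ n ∈ Λ)).card : ℝ) * H := by
      calc ∑ n ∈ (Icc 1 N).filter (fun n => ¬ n ∈ Λ), ‖∑ h ∈ range H, g (n + h)‖
          ≤ ∑ n ∈ (Icc 1 N).filter (fun n => ¬ n ∈ Λ), (H : ℝ) := by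
            apply Finset.sum_le_sum
            intro n _
            calc ‖∑ h ∈ range H, g (n + h)‖ ≤ ((range H).card : ℝ) :=
                  norm_sum_le_card _ _ (fun x => hg1 _)
              _ = H := by rw [card_range]
        _ = (((Icc 1 N).filter (fun n => ¬ n ∈ Λ)).card : ℝ) * H := by
            rw [Finset.sum_const, nsmul_eq_mul]
    have hcards : B.card + ((Icc 1 N).filter (fun n => ¬ n ∈ Λ)).card = N := by
      rw [hB, Finset.card_filter_add_card_filter_not, Nat.card_Icc]
      omega
    have hcardR : (((Icc 1 N).filter (fun n => ¬ n ∈ Λ)).card : ℝ) = (N : ℝ) - B.card := by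
      have : ((B.card + ((Icc 1 N).filter (fun n => ¬ n ∈ Λ)).card : ℕ) : ℝ) = (N : ℝ) := by
        exact_mod_cast congrArg (fun k : ℕ => (k : ℝ)) hcards
      push_cast at this
      linarith
    rw [hsplit]
    calc (∑ n ∈ B, ‖∑ h ∈ range H, g (n + h)‖) +
          ∑ n ∈ (Icc 1 N).filter (fun n => ¬ n ∈ Λ), ‖∑ h ∈ range H, g (n + h)‖
        ≤ M + (((Icc 1 N).filter (fun n => ¬ n ∈ Λ)).card : ℝ) * H := add_le_add b1 b2
      _ = M + ((N : ℝ) - B.card) * H := by rw [hcardR]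
  -- relate A N to M
  have hAM : A N = (1 / N : ℝ) * ((1 / H) * M) := by
    have habs : ∀ n ∈ Icc 1 N, |(1 / H : ℝ) * ∑ h ∈ range H, (μ (n + h) : ℝ)| =
        (1 / H : ℝ) * |∑ h ∈ range H, (μ (n + h) : ℝ)| := fun n _ => by
      rw [abs_mul, abs_of_nonneg (by positivity : (0:ℝ) ≤ 1/H)]
    rw [hA]
    simp only
    rw [Finset.sum_congr rfl habs, ← Finset.mul_sum, hM]
  -- final arithmetic
  have e1 : M < ε / 3 * (N * H) := by
    have hm : (1 / N : ℝ) * ((1 / H) * M) < ε / 3 := by rw [← hAM]; exact h1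
    have := mul_lt_mul_of_pos_right hm (by positivity : (0:ℝ) < N * H)
    calc M = (1 / N : ℝ) * ((1 / H) * M) * (N * H) := by field_simp
      _ < ε / 3 * (N * H) := this
  have e2 : (N : ℝ) - B.card < ε / 3 * N := by
    rw [hc] at h2
    have := mul_lt_mul_of_pos_right h2 hNpos
    calc (N : ℝ) - B.card = (1 - (B.card : ℝ) / N) * N := by field_simp
      _ < ε / 3 * N := this
  have e3 : 2 * (H : ℝ) * H < ε / 3 * N := (div_lt_iff₀ hNpos).mp h3
  have hSnn : (0 : ℝ) ≤ ‖S‖ := norm_nonneg _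
  have hεN : (0 : ℝ) < ε * N := by positivity
  have h4 : (H : ℝ) * ‖S‖ < (H : ℝ) * (ε * N) := by nlinarith
  have h5 : ‖S‖ < ε * N := lt_of_mul_lt_mul_left h4 hHpos.le
  have hnorm : ‖(1 / N : ℂ) * ∑ n ∈ Icc 1 N, f n * (μ n : ℂ)‖ = (1 / N : ℝ) * ‖S‖ := by
    rw [norm_mul, norm_div, norm_one, Complex.norm_natCast, hS]
  rw [hnorm]
  calc (1 / N : ℝ) * ‖S‖ < (1 / N) * (ε * N) :=
        mul_lt_mul_of_pos_left h5 (by positivity)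
    _ = ε := by field_simp
end
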